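/- arXiv:0812.2724 — 4 statements merged into one kernel-verified Lean document; each statement's English description precedes it below -/
import Mathlib

section
/- Let P_h and P_v be the horizontal and vertical transition matrices of a nearest-neighbor Markov chain on the grid {0,...,m}×{0,...,n}, with entries L_{i,j}, R_{i,j}, D_{i,j}, U_{i,j}. Then P_h P_v = P_v P_h if and only if for all (i,j) with 0 ≤ i ≤ m−1 and 0 ≤ j ≤ n−1: U_{i,j}R_{i,j+1} = R_{i,j}U_{i+1,j}, D_{i,j+1}R_{i,j} = R_{i,j+1}D_{i+1,j+1}, D_{i+1,j+1}L_{i+1,j} = L_{i+1,j+1}D_{i,j+1}, and U_{i+1,j}L_{i+1,j+1} = L_{i+1,j}U_{i,j}. -/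
/-!
`Ph` only moves along the first coordinate and `Pv` only along the second, so the sums defining
`(Ph * Pv) p q` and `(Pv * Ph) p q` each collapse to one product, taken along the two sides of the
rectangle spanned by `p` and `q`. For nearest-neighbour steps these products vanish unless `p` and
`q` are opposite corners of a unit square, and equating them for the four orientations of such a
diagonal gives exactly the four relations.
-/

namespace Matrix

variable {α β S : Type*} [Fintype α] [Fintype β] [NonUnitalNonAssocSemiring S]

def IsHorizontal (A : Matrix (α × β) (α × β) S) : Prop := ∀ p q, p.2 ≠ q.2 → A p q = 0

def IsVertical (A : Matrix (α × β) (α × β) S) : Prop := ∀ p q, p.1 ≠ q.1 → A p q = 0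

variable {A B : Matrix (α × β) (α × β) S}

theorem mul_apply_of_isHorizontal_of_isVertical (hA : A.IsHorizontal) (hB : B.IsVertical)
    (p q : α × β) : (A * B) p q = A p (q.1, p.2) * B (q.1, p.2) q := by
  classical
  refine Finset.sum_eq_single_of_mem _ (Finset.mem_univ _) fun r _ hr => ?_
  by_cases hr₁ : r.1 = q.1
  · exact mul_eq_zero_of_left (hA p r fun hr₂ => hr (Prod.ext hr₁ hr₂.symm)) _
  · exact mul_eq_zero_of_right _ (hB r q hr₁)

theorem mul_apply_of_isVertical_of_isHorizontal (hB : B.IsVertical) (hA : A.IsHorizontal)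
    (p q : α × β) : (B * A) p q = B p (p.1, q.2) * A (p.1, q.2) q := by
  classical
  refine Finset.sum_eq_single_of_mem _ (Finset.mem_univ _) fun r _ hr => ?_
  by_cases hr₁ : p.1 = r.1
  · exact mul_eq_zero_of_right _ (hA r q fun hr₂ => hr (Prod.ext hr₁.symm hr₂))
  · exact mul_eq_zero_of_left (hB p r hr₁) _

theorem mul_comm_iff_of_isHorizontal_of_isVertical (hA : A.IsHorizontal) (hB : B.IsVertical) :
    A * B = B * A ↔
      ∀ p q : α × β, A p (q.1, p.2) * B (q.1, p.2) q = B p (p.1, q.2) * A (p.1, q.2) q := by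
  simp only [← Matrix.ext_iff, mul_apply_of_isHorizontal_of_isVertical hA hB,
    mul_apply_of_isVertical_of_isHorizontal hB hA]

end Matrix

section NearestNeighbor

variable {S : Type*} [Zero S]

def nearestNeighbor (f g : ℕ → S) (x y : ℕ) : S :=
  if y = x + 1 then f x else if x = y + 1 then g x else 0

@[simp]
theorem nearestNeighbor_succ_right (f g : ℕ → S) (x : ℕ) :
    nearestNeighbor f g x (x + 1) = f x := by
  simp [nearestNeighbor]

@[simp]
theorem nearestNeighbor_succ_left (f g : ℕ → S) (y : ℕ) :
    nearestNeighbor f g (y + 1) y = g (y + 1) := by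
  rw [nearestNeighbor, if_neg (by omega), if_pos rfl]

theorem nearestNeighbor_of_not_adjacent (f g : ℕ → S) {x y : ℕ} (hxy : y ≠ x + 1)
    (hyx : x ≠ y + 1) : nearestNeighbor f g x y = 0 := by
  simp [nearestNeighbor, hxy, hyx]

end NearestNeighbor

section SquareRelations

variable {S : Type*} [CommRing S]

def SquareRelations (m n : ℕ) (L R D U : ℕ → ℕ → S) : Prop :=
  ∀ i j : ℕ, i < m → j < n →
    U i j * R i (j+1) = R i j * U (i+1) j ∧
    D i (j+1) * R i j = R i (j+1) * D (i+1) (j+1) ∧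
    D (i+1) (j+1) * L (i+1) j = L (i+1) (j+1) * D i (j+1) ∧
    U (i+1) j * L (i+1) (j+1) = L (i+1) j * U i j

variable {m n : ℕ} {L R D U : ℕ → ℕ → S}

theorem squareRelations_iff :
    SquareRelations m n L R D U ↔
      ∀ a, a < m + 1 → ∀ b, b < n + 1 → ∀ c, c < m + 1 → ∀ d, d < n + 1 →
        nearestNeighbor (R · b) (L · b) a c * nearestNeighbor (U c) (D c) b d =
          nearestNeighbor (U a) (D a) b d * nearestNeighbor (R · d) (L · d) a c := by
  constructor
  · intro rel a ha b hb c hc d hd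
    have adjacent_cases (x y : ℕ) : y = x + 1 ∨ x = y + 1 ∨ (y ≠ x + 1 ∧ x ≠ y + 1) := by omega
    rcases adjacent_cases a c with rfl | rfl | ⟨hac, hca⟩
    · rcases adjacent_cases b d with rfl | rfl | ⟨hbd, hdb⟩
      · simp only [nearestNeighbor_succ_right]
        linear_combination -(rel a b (by omega) (by omega)).1
      · simp only [nearestNeighbor_succ_right, nearestNeighbor_succ_left]
        linear_combination -(rel a d (by omega) (by omega)).2.1
      · simp only [nearestNeighbor_of_not_adjacent _ _ hbd hdb, mul_zero, zero_mul]
    · rcases adjacent_cases b d with rfl | rfl | ⟨hbd, hdb⟩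
      · simp only [nearestNeighbor_succ_right, nearestNeighbor_succ_left]
        linear_combination -(rel c b (by omega) (by omega)).2.2.2
      · simp only [nearestNeighbor_succ_left]
        linear_combination -(rel c d (by omega) (by omega)).2.2.1
      · simp only [nearestNeighbor_of_not_adjacent _ _ hbd hdb, mul_zero, zero_mul]
    · simp only [nearestNeighbor_of_not_adjacent _ _ hac hca, mul_zero, zero_mul]
  · intro h i j hi hj
    have e₁ := h i (by omega) j (by omega) (i + 1) (by omega) (j + 1) (by omega)
    have e₂ := h i (by omega) (j + 1) (by omega) (i + 1) (by omega) j (by omega)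
    have e₃ := h (i + 1) (by omega) (j + 1) (by omega) i (by omega) j (by omega)
    have e₄ := h (i + 1) (by omega) j (by omega) i (by omega) (j + 1) (by omega)
    simp only [nearestNeighbor_succ_right, nearestNeighbor_succ_left] at e₁ e₂ e₃ e₄
    exact ⟨by linear_combination -e₁, by linear_combination -e₂, by linear_combination -e₃,
      by linear_combination -e₄⟩

end SquareRelations

/-- On the grid `{0,...,m} × {0,...,n}`, the horizontal transition
matrix `Ph` (entries `R`, `L`) and the vertical transition matrix `Pv` (entries `U`, `D`)
commute iff the four relations (2.1) hold on every unit square. -/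
theorem commute_iff_square_relations (m n : ℕ) (L R D U : ℕ → ℕ → ℝ)
    (Ph Pv : Matrix (Fin (m+1) × Fin (n+1)) (Fin (m+1) × Fin (n+1)) ℝ)
    (hPh : Ph = fun p q =>
      if (q.1 : ℕ) = (p.1 : ℕ) + 1 ∧ q.2 = p.2 then R p.1 p.2
      else if (p.1 : ℕ) = (q.1 : ℕ) + 1 ∧ q.2 = p.2 then L p.1 p.2 else 0)
    (hPv : Pv = fun p q =>
      if (q.2 : ℕ) = (p.2 : ℕ) + 1 ∧ q.1 = p.1 then U p.1 p.2
      else if (p.2 : ℕ) = (q.2 : ℕ) + 1 ∧ q.1 = p.1 then D p.1 p.2 else 0) :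
    Ph * Pv = Pv * Ph ↔
      ∀ i j : ℕ, i < m → j < n →
        U i j * R i (j+1) = R i j * U (i+1) j ∧
        D i (j+1) * R i j = R i (j+1) * D (i+1) (j+1) ∧
        D (i+1) (j+1) * L (i+1) j = L (i+1) (j+1) * D i (j+1) ∧
        U (i+1) j * L (i+1) (j+1) = L (i+1) j * U i j := by
  have hH : Ph.IsHorizontal := fun p q h => by simp [hPh, Ne.symm h]
  have hV : Pv.IsVertical := fun p q h => by simp [hPv, Ne.symm h]
  rw [Matrix.mul_comm_iff_of_isHorizontal_of_isVertical hH hV]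
  subst hPh hPv
  simp only [Prod.forall, Fin.forall_iff, and_true]
  -- the remaining `if`s are `nearestNeighbor` unfolded
  exact squareRelations_iff.symm
end

section
/- Let P(u,v) > 0 for all nearest-neighbor pairs u ∼ v in the grid E, and suppose the associated directional transition matrices P_1,...,P_m commute pairwise (equivalently, the quadratic commutation relations P(u,u+e_i)P(u+e_i,u+e_i±e_j) = P(u,u±e_j)P(u±e_j,u+e_i±e_j) hold, in all four sign combinations). Then P is reversible: there exist positive constants b_u, u ∈ E, unique up to a common positive multiple, such that b_u P(u,v) = b_v P(v,u) for all u ∼ v. -/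
/-- Vertices of the grid `{0,…,n₁} × ⋯ × {0,…,n_m}`. -/
abbrev GridV (m : ℕ) (n : Fin m → ℕ) := ∀ k : Fin m, Fin (n k + 1)

/-- `u` and `v` are nearest neighbors in direction `k`, i.e. `u - v ∈ {±e_k}`. -/
abbrev gridAdjDir {m : ℕ} {n : Fin m → ℕ} (k : Fin m) (u v : GridV m n) : Prop :=
  (∀ l, l ≠ k → u l = v l) ∧ ((u k : ℕ) + 1 = (v k : ℕ) ∨ (v k : ℕ) + 1 = (u k : ℕ))

/-- Nearest-neighbor relation `u ∼ v` on the grid. -/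
abbrev gridAdj {m : ℕ} {n : Fin m → ℕ} (u v : GridV m n) : Prop :=
  ∃ k, gridAdjDir k u v

/-- The directional transition matrix `P_k`. -/
def dirMatrix {m : ℕ} (n : Fin m → ℕ) (P : GridV m n → GridV m n → ℝ) (k : Fin m) :
    Matrix (GridV m n) (GridV m n) ℝ :=
  fun u v => if gridAdjDir k u v then P u v else 0

/-!
Commutation of `P_k` and `P_l`, read off at the two opposite corners `x`, `w` of a unit square
`x → a → w`, `x → b → w`, gives `P(x,a) P(a,w) = P(x,b) P(b,w)` and the same with `x` and `w`
exchanged. Hence the edge function `c(u,v) = log P(u,v) - log P(v,u)` sums to zero around every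
unit square. Since the squares generate all cycles of the grid, `c` is a gradient,
`c(u,v) = φ(v) - φ(u)`, and `b = exp φ` satisfies detailed balance. For uniqueness, `b' / b` is
constant along edges, hence constant on the connected grid.
-/

open Real

theorem gridAdjDir.symm {m : ℕ} {n : Fin m → ℕ} {k : Fin m} {u v : GridV m n}
    (h : gridAdjDir k u v) : gridAdjDir k v u :=
  ⟨fun l hl => (h.1 l hl).symm, h.2.symm⟩

namespace GridV

variable {m : ℕ} {n : Fin m → ℕ}

def height (u : GridV m n) : ℕ := ∑ k, (u k : ℕ)

def down (u : GridV m n) (k : Fin m) : GridV m n :=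
  Function.update u k ⟨(u k : ℕ) - 1, by omega⟩

@[simp]
theorem down_apply_self (u : GridV m n) (k : Fin m) : (down u k k : ℕ) = u k - 1 := by
  simp [down]

theorem down_apply_of_ne (u : GridV m n) {k l : Fin m} (h : l ≠ k) : down u k l = u l :=
  Function.update_of_ne h _ _

theorem gridAdjDir_down {u : GridV m n} {k : Fin m} (hk : (u k : ℕ) ≠ 0) :
    gridAdjDir k (down u k) u :=
  ⟨fun _ hl => down_apply_of_ne u hl, Or.inl (by simp only [down_apply_self]; omega)⟩

theorem down_eq_of_gridAdjDir {u v : GridV m n} {k : Fin m} (h : gridAdjDir k u v)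
    (hk : (u k : ℕ) + 1 = v k) : down v k = u := by
  funext l
  by_cases hl : l = k
  · subst hl
    exact Fin.ext (by simp only [down_apply_self]; omega)
  · rw [down_apply_of_ne v hl, h.1 l hl]

theorem down_down_comm (u : GridV m n) {k l : Fin m} (h : k ≠ l) :
    down (down u k) l = down (down u l) k := by
  simp only [down, Function.update_of_ne h, Function.update_of_ne h.symm]
  exact Function.update_comm h _ _ _

theorem height_down_lt {u : GridV m n} {k : Fin m} (hk : (u k : ℕ) ≠ 0) :
    height (down u k) < height u := by
  refine Finset.sum_lt_sum (fun l _ => ?_) ⟨k, Finset.mem_univ k, ?_⟩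
  · by_cases hl : l = k
    · subst hl; simp
    · rw [down_apply_of_ne u hl]
  · show (down u k k : ℕ) < u k
    rw [down_apply_self]; omega

theorem eq_zero_of_forall_eq_zero {u : GridV m n} (h : ∀ k, (u k : ℕ) = 0) : u = 0 :=
  funext fun k => Fin.ext (by simp [h k])

theorem apply_eq_apply_zero_of_forall_gridAdj {α : Type*} {f : GridV m n → α}
    (hf : ∀ u v, gridAdj u v → f u = f v) (u : GridV m n) : f u = f 0 := by
  by_cases h : ∃ k, (u k : ℕ) ≠ 0
  · obtain ⟨k, hk⟩ := h
    rw [hf u (down u k) ⟨k, (gridAdjDir_down hk).symm⟩]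
    exact apply_eq_apply_zero_of_forall_gridAdj hf (down u k)
  · push Not at h
    rw [eq_zero_of_forall_eq_zero h]
termination_by height u
decreasing_by exact height_down_lt hk

section Potential

variable {G : Type*} [AddCommGroup G] (c : GridV m n → GridV m n → G)

/-- The sum of `c` along a path from the origin to `u` that, read backwards, lowers some nonzero
coordinate at each step; `potential_eq_add` shows that the choice of path does not matter. -/
noncomputable def potential (u : GridV m n) : G :=
  if h : ∃ k, (u k : ℕ) ≠ 0 then potential (down u h.choose) + c (down u h.choose) u else 0
termination_by height u
decreasing_by exact height_down_lt h.choose_spec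

variable {c}

theorem potential_eq_add
    (hclosed : ∀ ⦃k l : Fin m⦄ ⦃x a b w : GridV m n⦄, k ≠ l → gridAdjDir k x a →
      gridAdjDir l a w → gridAdjDir l x b → gridAdjDir k b w → c x a + c a w = c x b + c b w)
    (u : GridV m n) {l : Fin m} (hl : (u l : ℕ) ≠ 0) :
    potential c u = potential c (down u l) + c (down u l) u := by
  have hex : ∃ k, (u k : ℕ) ≠ 0 := ⟨l, hl⟩
  rw [potential, dif_pos hex]
  set k := hex.choose
  by_cases hkl : k = l
  · rw [hkl]
  have hk : (u k : ℕ) ≠ 0 := hex.choose_spec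
  have hl' : (down u k l : ℕ) ≠ 0 := by rwa [down_apply_of_ne u (Ne.symm hkl)]
  have hk' : (down u l k : ℕ) ≠ 0 := by rwa [down_apply_of_ne u hkl]
  -- both descents continue to the corner `down (down u k) l` and enclose one unit square
  have hsquare := hclosed (Ne.symm hkl) (gridAdjDir_down hl') (gridAdjDir_down hk)
    (down_down_comm u hkl ▸ gridAdjDir_down hk') (gridAdjDir_down hl)
  rw [potential_eq_add hclosed (down u k) hl', potential_eq_add hclosed (down u l) hk',
    ← down_down_comm u hkl, add_assoc, add_assoc, hsquare]
termination_by height u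
decreasing_by all_goals exact height_down_lt ‹_›

/-- Discrete Poincaré lemma. -/
theorem exists_potential (hanti : ∀ ⦃u v⦄, gridAdj u v → c v u = -c u v)
    (hclosed : ∀ ⦃k l : Fin m⦄ ⦃x a b w : GridV m n⦄, k ≠ l → gridAdjDir k x a →
      gridAdjDir l a w → gridAdjDir l x b → gridAdjDir k b w → c x a + c a w = c x b + c b w) :
    ∃ φ : GridV m n → G, ∀ u v, gridAdj u v → φ v = φ u + c u v := by
  refine ⟨potential c, fun u v ⟨k, huv⟩ => ?_⟩
  rcases huv.2 with hup | hdown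
  · rw [potential_eq_add hclosed v (l := k) (by omega), down_eq_of_gridAdjDir huv hup]
  · rw [potential_eq_add hclosed u (l := k) (by omega), down_eq_of_gridAdjDir huv.symm hdown,
      hanti ⟨k, huv.symm⟩, add_neg_cancel_right]

end Potential

end GridV

section Commuting

variable {m : ℕ} {n : Fin m → ℕ}

theorem eq_of_gridAdjDir_of_gridAdjDir {k l : Fin m} (hkl : k ≠ l) {x a v w : GridV m n}
    (hxa : gridAdjDir k x a) (haw : gridAdjDir l a w) (hxv : gridAdjDir k x v)
    (hvw : gridAdjDir l v w) : v = a := by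
  funext j
  by_cases hj : j = k
  · subst hj
    rw [hvw.1 j hkl, haw.1 j hkl]
  · rw [← hxv.1 j hj, ← hxa.1 j hj]

theorem dirMatrix_mul_apply (P : GridV m n → GridV m n → ℝ) {k l : Fin m} (hkl : k ≠ l)
    {x a w : GridV m n} (hxa : gridAdjDir k x a) (haw : gridAdjDir l a w) :
    (dirMatrix n P k * dirMatrix n P l) x w = P x a * P a w := by
  rw [Matrix.mul_apply, Finset.sum_eq_single a]
  · rw [dirMatrix, dirMatrix, if_pos hxa, if_pos haw]
  · intro v _ hva
    simp only [dirMatrix]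
    split_ifs with hxv hvw
    · exact absurd (eq_of_gridAdjDir_of_gridAdjDir hkl hxa haw hxv hvw) hva
    all_goals simp
  · simp

theorem mul_eq_mul_of_dirMatrix_commute {P : GridV m n → GridV m n → ℝ} {k l : Fin m}
    (hcomm : dirMatrix n P k * dirMatrix n P l = dirMatrix n P l * dirMatrix n P k) (hkl : k ≠ l)
    {x a b w : GridV m n} (hxa : gridAdjDir k x a) (haw : gridAdjDir l a w)
    (hxb : gridAdjDir l x b) (hbw : gridAdjDir k b w) :
    P x a * P a w = P x b * P b w := by
  rw [← dirMatrix_mul_apply P hkl hxa haw, ← dirMatrix_mul_apply P hkl.symm hxb hbw, hcomm]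

theorem log_ratio_path_eq_of_commute {P : GridV m n → GridV m n → ℝ}
    (hpos : ∀ u v, gridAdj u v → 0 < P u v) {k l : Fin m}
    (hcomm : dirMatrix n P k * dirMatrix n P l = dirMatrix n P l * dirMatrix n P k) (hkl : k ≠ l)
    {x a b w : GridV m n} (hxa : gridAdjDir k x a) (haw : gridAdjDir l a w)
    (hxb : gridAdjDir l x b) (hbw : gridAdjDir k b w) :
    (log (P x a) - log (P a x)) + (log (P a w) - log (P w a)) =
      (log (P x b) - log (P b x)) + (log (P b w) - log (P w b)) := by
  have hP : ∀ {i u v}, gridAdjDir i u v → 0 < P u v := fun h => hpos _ _ ⟨_, h⟩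
  have hlog : ∀ {p q r s : ℝ}, 0 < p → 0 < q → 0 < r → 0 < s → p * q = r * s →
      log p + log q = log r + log s := fun hp hq hr hs h => by
    rw [← log_mul hp.ne' hq.ne', h, log_mul hr.ne' hs.ne']
  have forward := mul_eq_mul_of_dirMatrix_commute hcomm hkl hxa haw hxb hbw
  have backward := mul_eq_mul_of_dirMatrix_commute hcomm hkl hbw.symm hxb.symm haw.symm hxa.symm
  linarith [hlog (hP hxa) (hP haw) (hP hxb) (hP hbw) forward,
    hlog (hP hbw.symm) (hP hxb.symm) (hP haw.symm) (hP hxa.symm) backward]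

def DetailedBalance (P : GridV m n → GridV m n → ℝ) (b : GridV m n → ℝ) : Prop :=
  ∀ u v, gridAdj u v → b u * P u v = b v * P v u

theorem exists_pos_detailedBalance_of_commute {P : GridV m n → GridV m n → ℝ}
    (hpos : ∀ u v, gridAdj u v → 0 < P u v)
    (hcomm : ∀ i j, dirMatrix n P i * dirMatrix n P j = dirMatrix n P j * dirMatrix n P i) :
    ∃ b : GridV m n → ℝ, (∀ u, 0 < b u) ∧ DetailedBalance P b := by
  obtain ⟨φ, hφ⟩ := GridV.exists_potential (c := fun u v => log (P u v) - log (P v u))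
    (fun _ _ _ => by ring)
    (fun k l _ _ _ _ hkl => log_ratio_path_eq_of_commute hpos (hcomm k l) hkl)
  refine ⟨fun u => exp (φ u), fun u => exp_pos _, fun u v huv => ?_⟩
  obtain ⟨k, hk⟩ := huv
  have hvu : 0 < P v u := hpos v u ⟨k, hk.symm⟩
  dsimp only
  rw [hφ u v ⟨k, hk⟩, exp_add, exp_sub, exp_log (hpos u v ⟨k, hk⟩), exp_log hvu]
  field_simp

theorem DetailedBalance.div_eq_div {P : GridV m n → GridV m n → ℝ}
    (hpos : ∀ u v, gridAdj u v → 0 < P u v) {b b' : GridV m n → ℝ} (hb : ∀ u, 0 < b u)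
    (hbal : DetailedBalance P b) (hbal' : DetailedBalance P b') {u v : GridV m n}
    (huv : gridAdj u v) : b' u / b u = b' v / b v := by
  obtain ⟨k, hk⟩ := huv
  rw [div_eq_div_iff (hb u).ne' (hb v).ne']
  apply mul_right_cancel₀ (hpos v u ⟨k, hk.symm⟩).ne'
  linear_combination (-b' u) * hbal u v ⟨k, hk⟩ + b u * hbal' u v ⟨k, hk⟩

theorem DetailedBalance.eq_mul {P : GridV m n → GridV m n → ℝ}
    (hpos : ∀ u v, gridAdj u v → 0 < P u v) {b b' : GridV m n → ℝ} (hb : ∀ u, 0 < b u)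
    (hbal : DetailedBalance P b) (hbal' : DetailedBalance P b') (u : GridV m n) :
    b' u = b' 0 / b 0 * b u := by
  rw [← GridV.apply_eq_apply_zero_of_forall_gridAdj (f := fun u => b' u / b u)
    (fun _ _ huv => hbal.div_eq_div hpos hb hbal' huv) u, div_mul_cancel₀ _ (hb u).ne']

end Commuting

/-- If all nearest-neighbor transition probabilities are positive and the
directional matrices `P_1,…,P_m` commute pairwise, then `P` is reversible: there are positive
constants `b_u`, unique up to a common positive multiple, with `b_u P(u,v) = b_v P(v,u)`. -/
theorem reversible_of_commuting {m : ℕ} (n : Fin m → ℕ)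
    (P : GridV m n → GridV m n → ℝ)
    (hpos : ∀ u v, gridAdj u v → 0 < P u v)
    (hcomm : ∀ i j : Fin m,
      dirMatrix n P i * dirMatrix n P j = dirMatrix n P j * dirMatrix n P i) :
    ∃ b : GridV m n → ℝ, (∀ u, 0 < b u) ∧
      (∀ u v, gridAdj u v → b u * P u v = b v * P v u) ∧
      ∀ b' : GridV m n → ℝ, (∀ u, 0 < b' u) →
        (∀ u v, gridAdj u v → b' u * P u v = b' v * P v u) →
        ∃ c : ℝ, 0 < c ∧ ∀ u, b' u = c * b u := by
  obtain ⟨b, hb_pos, hb_bal⟩ := exists_pos_detailedBalance_of_commute hpos hcomm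
  exact ⟨b, hb_pos, hb_bal, fun b' hb'_pos hb'_bal =>
    ⟨b' 0 / b 0, div_pos (hb'_pos 0) (hb_pos 0), hb_bal.eq_mul hpos hb_pos hb'_bal⟩⟩
end

section
/- With 𝒜 = 𝒜^{(n_1,...,n_m)} as above, the Gram matrix 𝒜𝒜^T is block diagonal: the block indexed by the vertex rows equals 2(Δ − J), twice the Laplacian of the grid graph E (Δ the diagonal matrix of vertex degrees, J the adjacency matrix), the block indexed by the edge-parameter rows in direction k equals 2∏_{ℓ≠k}(n_ℓ+1) times the identity, and all off-diagonal blocks vanish. -/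
open Matrix

/-- Directed edges of the grid. -/
abbrev DirEdge (m : ℕ) (n : Fin m → ℕ) := {p : GridV m n × GridV m n // gridAdj p.1 p.2}

/-- Row indices of the parametrization matrix `𝒜`. -/
abbrev ParamRow (m : ℕ) (n : Fin m → ℕ) := (GridV m n) ⊕ (Σ k : Fin m, Fin (n k))

/-- The parametrization matrix `𝒜^{(n₁,…,n_m)}`. -/
def paramMatrix (m : ℕ) (n : Fin m → ℕ) : Matrix (ParamRow m n) (DirEdge m n) ℝ :=
  fun r e =>
    match r with
    | Sum.inl u => (if u = e.1.1 then 1 else 0) - (if u = e.1.2 then 1 else 0)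
    | Sum.inr ⟨k, h⟩ =>
        if gridAdjDir k e.1.1 e.1.2 ∧ min (e.1.1 k : ℕ) (e.1.2 k : ℕ) = (h : ℕ)
        then 1 else 0

/-- Degree of a vertex in the grid graph. -/
def gridDegree {m : ℕ} (n : Fin m → ℕ) (u : GridV m n) : ℕ :=
  (Finset.univ.filter fun v : GridV m n => gridAdj u v).card

/-! Every grid edge `{u, v}` contributes the two columns `(u, v)` and `(v, u)` of `𝒜`. Reversing a
column negates its vertex part and fixes its edge-parameter part, so vertex rows are orthogonal to
edge-parameter rows, and the vertex part of `𝒜` is the oriented incidence matrix of the grid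
graph taken with both orientations, whose Gram matrix is twice the Laplacian. An ordered adjacent
pair has a single direction `k` and layer `min (u k) (v k)`, so distinct edge-parameter rows have
disjoint supports, and row `(k, h)` is supported on the pairs joining a vertex with `k`-th
coordinate `h` to its successor in direction `k`, in either order: `2 ∏_{ℓ ≠ k} (n_ℓ + 1)`
columns. -/

open Finset

namespace SimpleGraph

variable {V : Type*} (G : SimpleGraph V)

def reverseAdjPair : {p : V × V // G.Adj p.1 p.2} ≃ {p : V × V // G.Adj p.1 p.2} where
  toFun e := ⟨e.1.swap, e.2.symm⟩
  invFun e := ⟨e.1.swap, e.2.symm⟩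
  left_inv _ := rfl
  right_inv _ := rfl

variable [Fintype V] [DecidableRel G.Adj]

theorem sum_adjPair {M : Type*} [AddCommMonoid M] (F : V × V → M) :
    ∑ e : {p : V × V // G.Adj p.1 p.2}, F e.1 = ∑ p : V × V, if G.Adj p.1 p.2 then F p else 0 := by
  rw [← sum_filter]
  exact (sum_subtype _ (by simp) F).symm

theorem sum_adjPair_fst_eq {M : Type*} [AddCommMonoid M] [DecidableEq V] (F : V × V → M)
    (u : V) :
    ∑ e : {p : V × V // G.Adj p.1 p.2}, (if u = e.1.1 then F e.1 else 0) =
      ∑ w, if G.Adj u w then F (u, w) else 0 := by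
  rw [sum_adjPair G fun p => if u = p.1 then F p else 0, Fintype.sum_prod_type]
  simp only [← ite_and, and_comm (a := G.Adj _ _)]
  simp only [ite_and, sum_ite_irrel, sum_const_zero, sum_ite_eq,
    mem_univ, if_true]

variable [DecidableEq V] (R : Type*) [Ring R]

def orientedIncMatrix : Matrix V {p : V × V // G.Adj p.1 p.2} R :=
  fun u e => (if u = e.1.1 then 1 else 0) - (if u = e.1.2 then 1 else 0)

variable {G R}

theorem orientedIncMatrix_mulVec_apply (y : {p : V × V // G.Adj p.1 p.2} → R) (u : V) :
    (G.orientedIncMatrix R *ᵥ y) u =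
      ∑ e, if u = e.1.1 then y e - y (G.reverseAdjPair e) else 0 := by
  have hrev : ∑ e, (if u = e.1.2 then y e else 0) =
      ∑ e, if u = e.1.1 then y (G.reverseAdjPair e) else 0 :=
    (Equiv.sum_comp G.reverseAdjPair _).symm
  simp only [mulVec, dotProduct, orientedIncMatrix, sub_mul, ite_mul, one_mul, zero_mul,
    sum_sub_distrib]
  rw [hrev, ← sum_sub_distrib]
  simp only [ite_sub_ite, sub_zero]

theorem orientedIncMatrix_mulVec_eq_zero {y : {p : V × V // G.Adj p.1 p.2} → R}
    (hy : ∀ e, y (G.reverseAdjPair e) = y e) : G.orientedIncMatrix R *ᵥ y = 0 := by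
  ext u
  simp [orientedIncMatrix_mulVec_apply, hy]

variable (G R)

theorem orientedIncMatrix_mul_transpose :
    G.orientedIncMatrix R * (G.orientedIncMatrix R)ᵀ = (2 : R) • G.lapMatrix R := by
  ext u v
  have hanti : ∀ e, G.orientedIncMatrix R v (G.reverseAdjPair e) = - G.orientedIncMatrix R v e :=
    fun e => neg_sub _ _ |>.symm
  calc (G.orientedIncMatrix R * (G.orientedIncMatrix R)ᵀ) u v
      = (G.orientedIncMatrix R *ᵥ G.orientedIncMatrix R v) u := rfl
    _ = 2 * ∑ w, ((if v = u then 1 else 0) - (if v = w then 1 else 0)) *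
          (if G.Adj u w then 1 else 0) := by
      simp only [orientedIncMatrix_mulVec_apply, hanti, sub_neg_eq_add, ← two_mul, ← mul_ite_zero,
        ← mul_sum, mul_boole]
      exact congrArg _ (sum_adjPair_fst_eq G
        (fun p => (if v = p.1 then (1 : R) else 0) - if v = p.2 then 1 else 0) u)
    _ = ((2 : R) • G.lapMatrix R) u v := by
      simp only [sub_mul, sum_sub_distrib, ← mul_sum, ← G.degree_eq_sum_if_adj]
      simp only [boole_mul, sum_ite_eq, mem_univ, if_true]
      simp [lapMatrix, degMatrix, diagonal_apply, eq_comm (a := v)]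

end SimpleGraph

section Grid

variable {m : ℕ} {n : Fin m → ℕ}

theorem gridAdjDir_symm {k : Fin m} {u v : GridV m n} (h : gridAdjDir k u v) :
    gridAdjDir k v u :=
  ⟨fun l hl => (h.1 l hl).symm, h.2.symm⟩

theorem gridAdjDir_unique {k k' : Fin m} {u v : GridV m n} (h : gridAdjDir k u v)
    (h' : gridAdjDir k' u v) : k = k' := by
  by_contra hne
  have := congrArg Fin.val (h'.1 k hne)
  omega

variable (n) in
def gridGraph : SimpleGraph (GridV m n) where
  Adj := gridAdj
  symm.symm _ _ := fun ⟨k, h⟩ => ⟨k, gridAdjDir_symm h⟩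
  loopless.irrefl _ := fun ⟨_, h⟩ => by omega

instance : DecidableRel (gridGraph n).Adj := inferInstanceAs (DecidableRel (@gridAdj m n))

theorem gridGraph_degree (u : GridV m n) : (gridGraph n).degree u = gridDegree n u := by
  rw [← SimpleGraph.card_neighborFinset_eq_degree, SimpleGraph.neighborFinset_eq_filter]
  rfl

abbrev IsGridStep (k : Fin m) (h : Fin (n k)) (a b : GridV m n) : Prop :=
  a k = h.castSucc ∧ b = Function.update a k h.succ

theorem IsGridStep.not_symm {k : Fin m} {h : Fin (n k)} {a b : GridV m n}
    (hab : IsGridStep k h a b) : ¬ IsGridStep k h b a := fun hba => by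
  have hak := hab.1
  rw [hba.2] at hak
  simp [Fin.ext_iff] at hak

theorem gridAdjDir_and_min_eq_iff {k : Fin m} {h : Fin (n k)} {a b : GridV m n} :
    gridAdjDir k a b ∧ min (a k : ℕ) (b k : ℕ) = h ↔ IsGridStep k h a b ∨ IsGridStep k h b a := by
  constructor
  · rintro ⟨⟨hoff, hab | hba⟩, hmin⟩
    · left
      refine ⟨Fin.ext (by simp; omega), funext fun l => ?_⟩
      rcases eq_or_ne l k with rfl | hl
      · exact Fin.ext (by simp; omega)
      · simp [hl, hoff l hl]
    · right
      refine ⟨Fin.ext (by simp; omega), funext fun l => ?_⟩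
      rcases eq_or_ne l k with rfl | hl
      · exact Fin.ext (by simp; omega)
      · simp [hl, hoff l hl]
  · rintro (⟨ha, rfl⟩ | ⟨hb, rfl⟩)
    · refine ⟨⟨fun l hl => by simp [hl], ?_⟩, ?_⟩ <;> simp [ha]
    · refine ⟨⟨fun l hl => by simp [hl], ?_⟩, ?_⟩ <;> simp [hb]

theorem card_filter_apply_eq (k : Fin m) (c : Fin (n k + 1)) :
    (#{a : GridV m n | a k = c} : ℝ) = ∏ l ∈ univ.erase k, ((n l : ℝ) + 1) := by
  have := Fintype.card_filter_piFinset_eq_of_mem (fun l => (univ : Finset (Fin (n l + 1)))) k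
    (mem_univ c)
  simp only [Fintype.piFinset_univ, card_univ, Fintype.card_fin] at this
  rw [this]
  push_cast
  rfl

theorem sum_isGridStep (k : Fin m) (h : Fin (n k)) :
    ∑ p : GridV m n × GridV m n, (if IsGridStep k h p.1 p.2 then (1 : ℝ) else 0) =
      ∏ l ∈ univ.erase k, ((n l : ℝ) + 1) := by
  simp only [IsGridStep, Fintype.sum_prod_type, ite_and, sum_ite_irrel, sum_ite_eq', mem_univ,
    if_true, sum_const_zero, sum_boole]
  exact card_filter_apply_eq k h.castSucc

theorem paramMatrix_inr_reverseAdjPair (x : Σ k : Fin m, Fin (n k)) (e : DirEdge m n) :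
    paramMatrix m n (.inr x) ((gridGraph n).reverseAdjPair e) = paramMatrix m n (.inr x) e := by
  obtain ⟨k, h⟩ := x
  have hswap {a b : GridV m n} :
      gridAdjDir k a b ∧ min (a k : ℕ) (b k) = h → gridAdjDir k b a ∧ min (b k : ℕ) (a k) = h :=
    fun hab => ⟨gridAdjDir_symm hab.1, (min_comm _ _).trans hab.2⟩
  exact if_congr ⟨hswap, hswap⟩ rfl rfl

theorem paramMatrix_inr_mul_inr_of_ne {x y : Σ k : Fin m, Fin (n k)} (hxy : x ≠ y)
    (e : DirEdge m n) : paramMatrix m n (.inr x) e * paramMatrix m n (.inr y) e = 0 := by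
  obtain ⟨k, h⟩ := x
  obtain ⟨k', h'⟩ := y
  simp only [paramMatrix, mul_ite, mul_one, mul_zero, ite_eq_right_iff, one_ne_zero, imp_false]
  rintro ⟨hdir', hmin'⟩ ⟨hdir, hmin⟩
  obtain rfl := gridAdjDir_unique hdir hdir'
  exact hxy (Sigma.ext rfl (heq_of_eq (Fin.ext (hmin.symm.trans hmin'))))

theorem sum_paramMatrix_inr (x : Σ k : Fin m, Fin (n k)) :
    ∑ e : DirEdge m n, paramMatrix m n (.inr x) e = 2 * ∏ l ∈ univ.erase x.1, ((n l : ℝ) + 1) := by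
  obtain ⟨k, h⟩ := x
  have hsplit (a b : GridV m n) :
      (if gridAdj a b then if gridAdjDir k a b ∧ min (a k : ℕ) (b k) = h then (1 : ℝ) else 0
        else 0) =
        (if IsGridStep k h a b then 1 else 0) + (if IsGridStep k h b a then 1 else 0) := by
    by_cases hab : gridAdjDir k a b ∧ min (a k : ℕ) (b k) = h
    · rw [if_pos ⟨k, hab.1⟩, if_pos hab]
      rcases gridAdjDir_and_min_eq_iff.mp hab with hab' | hba
      · rw [if_pos hab', if_neg hab'.not_symm, add_zero]
      · rw [if_pos hba, if_neg hba.not_symm, zero_add]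
    · obtain ⟨hab', hba⟩ := not_or.mp (mt gridAdjDir_and_min_eq_iff.mpr hab)
      rw [if_neg hab, ite_self, if_neg hab', if_neg hba, add_zero]
  have hswap : ∑ p : GridV m n × GridV m n, (if IsGridStep k h p.2 p.1 then (1 : ℝ) else 0) =
      ∑ p : GridV m n × GridV m n, if IsGridStep k h p.1 p.2 then 1 else 0 :=
    Equiv.sum_comp (Equiv.prodComm _ _) fun p => if IsGridStep k h p.1 p.2 then (1 : ℝ) else 0
  refine ((gridGraph n).sum_adjPair fun p =>
    if gridAdjDir k p.1 p.2 ∧ min (p.1 k : ℕ) (p.2 k) = h then (1 : ℝ) else 0).trans ?_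
  rw [sum_congr rfl fun p _ => hsplit p.1 p.2, sum_add_distrib, hswap, sum_isGridStep, two_mul]

theorem paramMatrix_inr_mul_self (x : Σ k : Fin m, Fin (n k)) (e : DirEdge m n) :
    paramMatrix m n (.inr x) e * paramMatrix m n (.inr x) e = paramMatrix m n (.inr x) e := by
  obtain ⟨k, h⟩ := x
  by_cases hc : gridAdjDir k e.1.1 e.1.2 ∧ min (e.1.1 k : ℕ) (e.1.2 k) = h <;>
    simp [paramMatrix, hc]

end Grid

/-- The Gram matrix `𝒜𝒜ᵀ` is block diagonal: the vertex-row block is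
`2(Δ − J)` (twice the grid Laplacian), the edge-parameter block is
`2 ∏_{ℓ≠k}(n_ℓ+1)` times the identity, and the off-diagonal blocks vanish. -/
theorem paramMatrix_gram {m : ℕ} (n : Fin m → ℕ) :
    (∀ u v : GridV m n,
      (paramMatrix m n * (paramMatrix m n)ᵀ) (Sum.inl u) (Sum.inl v) =
        2 * ((if u = v then (gridDegree n u : ℝ) else 0) -
          (if gridAdj u v then 1 else 0))) ∧
    (∀ e f : Σ k : Fin m, Fin (n k),
      (paramMatrix m n * (paramMatrix m n)ᵀ) (Sum.inr e) (Sum.inr f) =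
        if e = f then 2 * ∏ l ∈ Finset.univ.erase e.1, ((n l : ℝ) + 1) else 0) ∧
    (∀ (u : GridV m n) (e : Σ k : Fin m, Fin (n k)),
      (paramMatrix m n * (paramMatrix m n)ᵀ) (Sum.inl u) (Sum.inr e) = 0) ∧
    (∀ (u : GridV m n) (e : Σ k : Fin m, Fin (n k)),
      (paramMatrix m n * (paramMatrix m n)ᵀ) (Sum.inr e) (Sum.inl u) = 0) := by
  -- The vertex rows of `paramMatrix m n` are by definition those of the oriented incidence matrix
  -- of `gridGraph n`.
  have hcross (u : GridV m n) (x : Σ k : Fin m, Fin (n k)) :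
      (paramMatrix m n * (paramMatrix m n)ᵀ) (.inl u) (.inr x) = 0 :=
    congrFun ((gridGraph n).orientedIncMatrix_mulVec_eq_zero (paramMatrix_inr_reverseAdjPair x)) u
  refine ⟨fun u v => ?_, fun x y => ?_, hcross, fun u x => ?_⟩
  · have hlap := congrFun (congrFun ((gridGraph n).orientedIncMatrix_mul_transpose ℝ) u) v
    rw [SimpleGraph.lapMatrix, SimpleGraph.degMatrix, Matrix.smul_apply, Matrix.sub_apply,
      diagonal_apply, SimpleGraph.adjMatrix_apply, gridGraph_degree, smul_eq_mul] at hlap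
    exact hlap
  · rw [mul_apply]
    split_ifs with hxy
    · subst hxy
      simp only [transpose_apply, paramMatrix_inr_mul_self]
      exact sum_paramMatrix_inr x
    · exact sum_eq_zero fun e _ => paramMatrix_inr_mul_inr_of_ne hxy e
  · rw [← transpose_apply (paramMatrix m n * (paramMatrix m n)ᵀ), transpose_mul,
      transpose_transpose]
    exact hcross u x
end

section
/- For the 1×1 grid (a single square), the two 4×4 transition matrices P_h (with nonzero entries R_{00}, R_{01}, L_{10}, L_{11}) and P_v (with nonzero entries U_{00}, U_{10}, D_{01}, D_{11}) commute if and only if either P_h = 0, or P_v = 0, or the 2×4 matrix with rows (R_{00}, U_{00}, L_{11}, D_{11}) and (R_{01}, U_{10}, L_{10}, D_{01}) has rank at most 1. -/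
/-!
Write `r = (R00, R01)`, `u = (U00, U10)`, `l = (L11, L10)`, `d = (D11, D01)` for the columns of
the `2 × 4` matrix. Computing the products entrywise, `Ph * Pv = Pv * Ph` says exactly that each of
`r, l` is proportional to each of `u, d` (four vanishing `2 × 2` minors), while rank at most one
says that all six minors vanish. Proportionality to a fixed nonzero vector of `K²` is transitive,
so `Ph ≠ 0` forces `u ∥ d` and `Pv ≠ 0` forces `r ∥ l`.
-/

open Matrix

section Rank

variable {K : Type*} [Field K] {m n : Type*}

theorem Matrix.rank_lt_card_height_iff [Fintype m] [Fintype n] (M : Matrix m n K) :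
    M.rank < Fintype.card m ↔ ¬ LinearIndependent K M.row := by
  refine ⟨fun h hli => h.ne hli.rank_matrix, fun h => (rank_le_card_height M).lt_of_ne ?_⟩
  intro heq
  apply h
  rw [linearIndependent_iff_card_eq_finrank_span, ← heq, rank_eq_finrank_span_row]
  rfl

theorem not_linearIndependent_fin2_iff (f : Fin 2 → n → K) :
    ¬ LinearIndependent K f ↔ ∀ i j, f 0 i * f 1 j = f 0 j * f 1 i := by
  rw [linearIndependent_fin2, not_and_or, not_not, not_forall_not]
  constructor
  · rintro (h | ⟨a, ha⟩) i j
    · simp [h]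
    · simp only [← ha, Pi.smul_apply, smul_eq_mul]
      ring
  · intro h
    refine or_iff_not_imp_left.2 fun h1 => ?_
    obtain ⟨k, hk⟩ := Function.ne_iff.1 h1
    refine ⟨f 0 k / f 1 k, funext fun j => ?_⟩
    simp only [Pi.smul_apply, smul_eq_mul]
    field_simp [show f 1 k ≠ 0 from hk]
    linear_combination h k j

theorem Matrix.rank_le_one_iff_mul_eq_mul [Fintype n] (M : Matrix (Fin 2) n K) :
    M.rank ≤ 1 ↔ ∀ i j, M 0 i * M 1 j = M 0 j * M 1 i := by
  simpa [Nat.lt_succ_iff] using M.rank_lt_card_height_iff.trans (not_linearIndependent_fin2_iff M)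

theorem Matrix.rank_fin_two_fin_four_le_one_iff (a b c d e f g h : K) :
    (!![a, b, c, d; e, f, g, h] : Matrix (Fin 2) (Fin 4) K).rank ≤ 1 ↔
      a * f = b * e ∧ a * g = c * e ∧ a * h = d * e ∧
        b * g = c * f ∧ b * h = d * f ∧ c * h = d * g := by
  simp only [rank_le_one_iff_mul_eq_mul, Fin.isValue, of_apply, cons_val', cons_val_fin_one,
    cons_val_zero, cons_val_one, Fin.forall_fin_succ, cons_val_succ, forall_const, true_and,
    and_true]
  constructor
  · rintro ⟨⟨h1, h2, h3⟩, ⟨-, h4, h5⟩, ⟨-, -, h6⟩, -⟩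
    exact ⟨h1, h2, h3, h4, h5, h6⟩
  · rintro ⟨h1, h2, h3, h4, h5, h6⟩
    exact ⟨⟨h1, h2, h3⟩, ⟨h1.symm, h4, h5⟩, ⟨h2.symm, h4.symm, h6⟩, h3.symm, h5.symm, h6.symm⟩

end Rank

section Transition

variable {K : Type*}

def horizontalTransition [Zero K] (R00 R01 L10 L11 : K) :
    Matrix (Fin 2 × Fin 2) (Fin 2 × Fin 2) K := fun p q =>
  if p = (0, 0) ∧ q = (1, 0) then R00
  else if p = (0, 1) ∧ q = (1, 1) then R01
  else if p = (1, 0) ∧ q = (0, 0) then L10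
  else if p = (1, 1) ∧ q = (0, 1) then L11 else 0

def verticalTransition [Zero K] (U00 U10 D01 D11 : K) :
    Matrix (Fin 2 × Fin 2) (Fin 2 × Fin 2) K := fun p q =>
  if p = (0, 0) ∧ q = (0, 1) then U00
  else if p = (1, 0) ∧ q = (1, 1) then U10
  else if p = (0, 1) ∧ q = (0, 0) then D01
  else if p = (1, 1) ∧ q = (1, 0) then D11 else 0

theorem horizontalTransition_eq_zero_iff [Zero K] {R00 R01 L10 L11 : K} :
    horizontalTransition R00 R01 L10 L11 = 0 ↔ R00 = 0 ∧ R01 = 0 ∧ L10 = 0 ∧ L11 = 0 := by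
  simp [horizontalTransition, ← Matrix.ext_iff, Prod.forall, Fin.forall_fin_two, and_assoc]

theorem verticalTransition_eq_zero_iff [Zero K] {U00 U10 D01 D11 : K} :
    verticalTransition U00 U10 D01 D11 = 0 ↔ U00 = 0 ∧ U10 = 0 ∧ D01 = 0 ∧ D11 = 0 := by
  simp [verticalTransition, ← Matrix.ext_iff, Prod.forall, Fin.forall_fin_two, and_assoc,
    and_left_comm]

theorem horizontalTransition_mul_comm_iff [CommRing K]
    {R00 R01 L10 L11 U00 U10 D01 D11 : K} :
    horizontalTransition R00 R01 L10 L11 * verticalTransition U00 U10 D01 D11 =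
        verticalTransition U00 U10 D01 D11 * horizontalTransition R00 R01 L10 L11 ↔
      R00 * U10 = U00 * R01 ∧ R00 * D01 = D11 * R01 ∧
        U00 * L10 = L11 * U10 ∧ L11 * D01 = D11 * L10 := by
  simp only [← ext_iff, mul_apply, horizontalTransition, Fin.isValue, verticalTransition, mul_ite,
    ite_mul, zero_mul, mul_zero, Fintype.sum_prod_type, Prod.mk.injEq, Fin.sum_univ_two, and_true,
    zero_ne_one, and_false, reduceIte, false_and, one_ne_zero, true_and, Prod.forall,
    Fin.forall_fin_two, zero_add, add_zero]
  rw [and_assoc, eq_comm (a := R01 * D11)]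
  ring_nf

end Transition

theorem mul_eq_mul_of_mul_eq_mul_of_ne_zero {K : Type*} [CommRing K] [IsDomain K]
    {p₀ p₁ q₀ q₁ s₀ s₁ : K} (hp : ¬(p₀ = 0 ∧ p₁ = 0))
    (hq : p₀ * q₁ = q₀ * p₁) (hs : p₀ * s₁ = s₀ * p₁) : q₀ * s₁ = s₀ * q₁ := by
  rcases not_and_or.1 hp with h | h
  · exact mul_left_cancel₀ h (by linear_combination q₀ * hs - s₀ * hq)
  · exact mul_left_cancel₀ h (by linear_combination q₁ * hs - s₁ * hq)

theorem mixed_minors_eq_iff {K : Type*} [CommRing K] [IsDomain K]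
    {R00 R01 L10 L11 U00 U10 D01 D11 : K} :
    R00 * U10 = U00 * R01 ∧ R00 * D01 = D11 * R01 ∧
        U00 * L10 = L11 * U10 ∧ L11 * D01 = D11 * L10 ↔
      (R00 = 0 ∧ R01 = 0 ∧ L10 = 0 ∧ L11 = 0) ∨ (U00 = 0 ∧ U10 = 0 ∧ D01 = 0 ∧ D11 = 0) ∨
        (R00 * U10 = U00 * R01 ∧ R00 * L10 = L11 * R01 ∧ R00 * D01 = D11 * R01 ∧
          U00 * L10 = L11 * U10 ∧ U00 * D01 = D11 * U10 ∧ L11 * D01 = D11 * L10) := by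
  constructor
  · rintro ⟨hru, hrd, hul, hld⟩
    by_cases hH : R00 = 0 ∧ R01 = 0 ∧ L10 = 0 ∧ L11 = 0
    · exact Or.inl hH
    by_cases hV : U00 = 0 ∧ U10 = 0 ∧ D01 = 0 ∧ D11 = 0
    · exact Or.inr (Or.inl hV)
    have hud : U00 * D01 = D11 * U10 := by
      by_cases hr : R00 = 0 ∧ R01 = 0
      · exact mul_eq_mul_of_mul_eq_mul_of_ne_zero (fun hl => hH ⟨hr.1, hr.2, hl.2, hl.1⟩)
          hul.symm hld
      · exact mul_eq_mul_of_mul_eq_mul_of_ne_zero hr hru hrd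
    have hrl : R00 * L10 = L11 * R01 := by
      by_cases hu : U00 = 0 ∧ U10 = 0
      · exact mul_eq_mul_of_mul_eq_mul_of_ne_zero (fun hd => hV ⟨hu.1, hu.2, hd.2, hd.1⟩)
          hrd.symm hld.symm
      · exact mul_eq_mul_of_mul_eq_mul_of_ne_zero hu hru.symm hul
    exact Or.inr (Or.inr ⟨hru, hrl, hrd, hul, hud, hld⟩)
  · rintro (⟨h1, h2, h3, h4⟩ | ⟨h1, h2, h3, h4⟩ | ⟨hru, -, hrd, hul, -, hld⟩)
    · simp [h1, h2, h3, h4]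
    · simp [h1, h2, h3, h4]
    · exact ⟨hru, hrd, hul, hld⟩

/-- **Example 5.2.** On the `1×1` grid, the horizontal and vertical
transition matrices commute iff one of them is zero or the associated `2×4` matrix has
rank at most one. -/
theorem commute_iff_zero_or_rank_le_one (R00 R01 L10 L11 U00 U10 D01 D11 : ℝ)
    (Ph Pv : Matrix (Fin 2 × Fin 2) (Fin 2 × Fin 2) ℝ)
    (hPh : Ph = fun p q =>
      if p = (0, 0) ∧ q = (1, 0) then R00
      else if p = (0, 1) ∧ q = (1, 1) then R01
      else if p = (1, 0) ∧ q = (0, 0) then L10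
      else if p = (1, 1) ∧ q = (0, 1) then L11 else 0)
    (hPv : Pv = fun p q =>
      if p = (0, 0) ∧ q = (0, 1) then U00
      else if p = (1, 0) ∧ q = (1, 1) then U10
      else if p = (0, 1) ∧ q = (0, 0) then D01
      else if p = (1, 1) ∧ q = (1, 0) then D11 else 0) :
    Ph * Pv = Pv * Ph ↔
      Ph = 0 ∨ Pv = 0 ∨
        (!![R00, U00, L11, D11; R01, U10, L10, D01] : Matrix (Fin 2) (Fin 4) ℝ).rank ≤ 1 := by
  obtain rfl : Ph = horizontalTransition R00 R01 L10 L11 := hPh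
  obtain rfl : Pv = verticalTransition U00 U10 D01 D11 := hPv
  rw [horizontalTransition_mul_comm_iff, horizontalTransition_eq_zero_iff,
    verticalTransition_eq_zero_iff, rank_fin_two_fin_four_le_one_iff]
  exact mixed_minors_eq_iff
end
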